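/- arXiv:1807.01353 — 6 statements merged into one kernel-verified Lean document; each statement's English description precedes it below -/
import Mathlib

section
/- Let q be an even positive integer, let N ∈ ℕ, and let M := binom(N+q−1, q) = (N+q−1)!/(q!·(N−1)!). Let (Ω, μ) be a measure space with μ a probability measure, and let X_N be an N-dimensional subspace of the real vector space of measurable functions f : Ω → ℝ satisfying ∫_Ω |f|^q dμ < ∞. Then there exist points ξ^1, …, ξ^M ∈ Ω and real numbers λ_1, …, λ_M such that ∫_Ω |f|^q dμ = Σ_{j=1}^M λ_j |f(ξ^j)|^q for every f ∈ X_N. -/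
/-!
If `f = ∑ cᵢ bᵢ` in a basis of `X`, the multinomial theorem writes `f ^ q` as a combination of
the `(N + q - 1).choose q` monomials of degree `q` in the `bᵢ`, so the `q`-th powers of elements of
`X` span a space `V` of at most that dimension. For even `q` we have `|f| ^ q = f ^ q`, so the
integral is a linear functional on `V`. Point evaluations separate the elements of `V`, hence span
its dual, and a basis of the dual can be chosen among them: writing the integral in that basis
gives the nodes and the weights.
-/

open MeasureTheory Module Submodule Set

section PointEvaluation

variable {K Ω : Type*} [Field K] (V : Submodule K (Ω → K))

def Submodule.pointEval (x : Ω) : Dual K V := (LinearMap.proj x).comp V.subtype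

@[simp]
theorem Submodule.pointEval_apply (x : Ω) (g : V) : V.pointEval x g = (g : Ω → K) x := rfl

variable [FiniteDimensional K V]

theorem Submodule.span_range_pointEval : span K (range V.pointEval) = ⊤ :=
  span_eq_top_of_ne_zero fun g hg ↦ by
    contrapose! hg
    ext x
    exact hg _ ⟨x, rfl⟩

theorem Submodule.exists_eq_sum_smul_pointEval (L : Dual K V) :
    ∃ (ξ : Fin (finrank K V) → Ω) (w : Fin (finrank K V) → K),
      L = ∑ j, w j • V.pointEval (ξ j) := by
  obtain ⟨κ, a, -, hspan, hli⟩ := exists_linearIndependent' K V.pointEval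
  have : Fintype κ := @Fintype.ofFinite κ hli.finite
  let b := Basis.mk hli (by rw [hspan, V.span_range_pointEval])
  let e : κ ≃ Fin (finrank K V) := Fintype.equivFinOfCardEq <| by
    rw [← finrank_eq_card_basis b, Subspace.dual_finrank_eq]
  refine ⟨a ∘ e.symm, fun j ↦ (b.reindex e).repr L j, ?_⟩
  conv_lhs => rw [← (b.reindex e).sum_repr L]
  simp [b]

theorem Submodule.exists_eq_sum_smul_pointEval_of_finrank_le [Nonempty Ω] (L : Dual K V) {m : ℕ}
    (hm : finrank K V ≤ m) :
    ∃ (ξ : Fin m → Ω) (w : Fin m → K), L = ∑ j, w j • V.pointEval (ξ j) := by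
  obtain ⟨k, rfl⟩ := Nat.exists_eq_add_of_le hm
  obtain ⟨ξ, w, hL⟩ := V.exists_eq_sum_smul_pointEval L
  refine ⟨Fin.append ξ fun _ ↦ Classical.arbitrary Ω, Fin.append w 0, ?_⟩
  simp [Fin.sum_univ_add, hL]

end PointEvaluation

section PowerSpan

instance Submodule.finite_span_range {R M ι : Type*} [Semiring R] [AddCommMonoid M] [Module R M]
    [Finite ι] (f : ι → M) : Module.Finite R (span R (Set.range f)) :=
  .span_of_finite R (finite_range f)

theorem span_image_pow_le_span_range_sym_prod {R A ι : Type*} [CommSemiring R] [CommSemiring A]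
    [Algebra R A] [Fintype ι] (b : ι → A) (q : ℕ) :
    span R ((· ^ q) '' (span R (range b) : Set A)) ≤
      span R (range fun k : Sym ι q ↦ (k.1.map b).prod) := by
  classical
  refine span_le.2 ?_
  rintro _ ⟨f, hf, rfl⟩
  obtain ⟨c, rfl⟩ := (mem_span_range_iff_exists_fun R).1 hf
  change (∑ i, c i • b i) ^ q ∈ _
  rw [Finset.sum_pow]
  refine sum_mem fun k _ ↦ ?_
  have hprod : (k.1.map fun i ↦ c i • b i).prod = (k.1.map c).prod • (k.1.map b).prod := by
    simp only [Algebra.smul_def, Multiset.prod_map_mul, map_multiset_prod, Multiset.map_map]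
    rfl
  rw [hprod, ← nsmul_eq_mul]
  exact nsmul_mem (smul_mem _ _ (subset_span (mem_range_self k))) _

variable {K A : Type*} [Field K] [CommRing A] [Algebra K A] (X : Submodule K A)
  [FiniteDimensional K X] (q : ℕ)

theorem Submodule.span_image_pow_le :
    span K ((· ^ q) '' (X : Set A)) ≤
      span K (range fun k : Sym (Fin (finrank K X)) q ↦
        (k.1.map fun i ↦ (finBasis K X i : A)).prod) := by
  have hX : span K (range fun i ↦ (finBasis K X i : A)) = X := by
    rw [show (fun i ↦ (finBasis K X i : A)) = X.subtype ∘ finBasis K X from rfl, range_comp,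
      ← map_span, (finBasis K X).span_eq, map_top, range_subtype]
  simpa only [hX] using
    span_image_pow_le_span_range_sym_prod (R := K) (fun i ↦ (finBasis K X i : A)) q

instance Submodule.finiteDimensional_span_image_pow :
    FiniteDimensional K (span K ((· ^ q) '' (X : Set A))) :=
  finiteDimensional_of_le (X.span_image_pow_le q)

theorem Submodule.finrank_span_image_pow_le :
    finrank K (span K ((· ^ q) '' (X : Set A))) ≤ (finrank K X + q - 1).choose q :=
  calc _ ≤ _ := finrank_mono (X.span_image_pow_le q)
    _ ≤ _ := finrank_range_le_card _
    _ = _ := by rw [Sym.card_sym_eq_choose, Fintype.card_fin]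

end PowerSpan

namespace MeasureTheory

variable {Ω : Type*} [MeasurableSpace Ω] (μ : Measure Ω)

def integrableSubmodule : Submodule ℝ (Ω → ℝ) where
  carrier := {f | Integrable f μ}
  add_mem' := Integrable.add
  zero_mem' := integrable_zero Ω ℝ μ
  smul_mem' c _ hf := hf.smul c

noncomputable def integralDual : Dual ℝ (integrableSubmodule μ) where
  toFun f := ∫ x, (f : Ω → ℝ) x ∂μ
  map_add' f g := integral_add f.2 g.2
  map_smul' c _ := integral_const_mul c _

@[simp]
theorem mem_integrableSubmodule {f : Ω → ℝ} : f ∈ integrableSubmodule μ ↔ Integrable f μ := .rfl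

@[simp]
theorem integralDual_apply (f : integrableSubmodule μ) :
    integralDual μ f = ∫ x, (f : Ω → ℝ) x ∂μ := rfl

end MeasureTheory

theorem exact_weighted_discretization_general_general
    {Ω : Type*} [MeasurableSpace Ω] (μ : Measure Ω) [IsProbabilityMeasure μ]
    (q N : ℕ) (hqe : Even q) (hN : 0 < N)
    (X : Submodule ℝ (Ω → ℝ)) (hdim : Module.finrank ℝ X = N)
    (hint : ∀ f ∈ X, Integrable (fun x => |f x| ^ q) μ) :
    ∃ (ξ : Fin ((N + q - 1).choose q) → Ω) (lam : Fin ((N + q - 1).choose q) → ℝ),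
      ∀ f ∈ X, ∫ x, |f x| ^ q ∂μ = ∑ j, lam j * |f (ξ j)| ^ q := by
  have : FiniteDimensional ℝ X := .of_finrank_pos (hdim ▸ hN)
  have : Nonempty Ω := nonempty_of_isProbabilityMeasure μ
  set V := span ℝ ((· ^ q) '' (X : Set (Ω → ℝ)))
  have hV : V ≤ integrableSubmodule μ := span_le.2 <| by
    rintro _ ⟨f, hf, rfl⟩
    simpa [hqe.pow_abs, Pi.pow_def] using hint f hf
  obtain ⟨ξ, lam, hL⟩ := V.exists_eq_sum_smul_pointEval_of_finrank_le
    ((integralDual μ).comp (inclusion hV)) (hdim ▸ X.finrank_span_image_pow_le q)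
  refine ⟨ξ, lam, fun f hf ↦ ?_⟩
  simpa [hqe.pow_abs] using LinearMap.congr_fun hL ⟨f ^ q, subset_span (mem_image_of_mem _ hf)⟩

/-- **Exact weighted discretization for general subspaces** (Theorem gfT1).
Let `q` be an even positive integer, `N ∈ ℕ`, and `M := (N+q-1).choose q`.
For every `N`-dimensional real subspace `X` of `L_q(Ω,μ)` (μ a probability measure)
there exist `M` nodes and real weights giving exact discretization of the `L_q`-norm. -/
theorem exact_weighted_discretization_general
    {Ω : Type*} [MeasurableSpace Ω] (μ : Measure Ω) [IsProbabilityMeasure μ]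
    (q N : ℕ) (hq0 : 0 < q) (hqe : Even q) (hN : 0 < N)
    (X : Submodule ℝ (Ω → ℝ)) (hdim : Module.finrank ℝ X = N)
    (hint : ∀ f ∈ X, Integrable (fun x => |f x| ^ q) μ) :
    ∃ (ξ : Fin ((N + q - 1).choose q) → Ω) (lam : Fin ((N + q - 1).choose q) → ℝ),
      ∀ f ∈ X, ∫ x, |f x| ^ q ∂μ = ∑ j, lam j * |f (ξ j)| ^ q :=
  exact_weighted_discretization_general_general μ q N hqe hN X hdim hint
end

section
/- Let q be an even positive integer, let N ∈ ℕ, and let M := binom(N+q−1, q). There exist a finite set Ω_M = {ξ^1,…,ξ^M} of M distinct points, equipped with the uniform probability measure μ assigning mass 1/M to each point, and an N-dimensional subspace X_N of real-valued functions on Ω_M, such that for every m < M there do not exist points η^1,…,η^m ∈ Ω_M and real weights λ_1,…,λ_m satisfying Σ_{ν=1}^m λ_ν |f(η^ν)|^q = ∫_{Ω_M} |f|^q dμ for all f ∈ X_N. -/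
/-!
Pick points `x₁, …, x_M ∈ ℝᴺ` whose vectors of degree-`q` monomials form a basis of `ℝ^M`; this is
possible because the `M` monomials are linearly independent functions on `ℝᴺ`. Let `X` consist of
the functions `j ↦ ⟨a, x_j⟩`. The multinomial theorem writes `⟨a, y⟩^q` as a linear functional of
the monomial vector of `y`, with coefficients `multinomial(k) aᵏ` that again separate points;
hence the `q`-th powers of the functions in `X` span `ℝ^M`. So a formula exact on `|f|^q = f^q`
determines the weight it puts on each point, and as the uniform measure charges all `M` points,
each of them must be a node. Also `dim X = N`: if all `⟨a, x_j⟩` vanish, the functional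
`⟨a, ·⟩^q` vanishes on the basis, so `|a|^{2q} = ⟨a, a⟩^q = 0`.
-/

open Finset Matrix Module Submodule

section Monomials

variable {σ K : Type*} [Fintype σ]

def monomialVector [CommMonoid K] (D : Finset (σ → ℕ)) (y : σ → K) : D → K :=
  fun k => ∏ i, y i ^ (k : σ → ℕ) i

theorem eq_zero_of_forall_dotProduct_monomialVector_eq_zero [CommRing K] [IsDomain K] [Infinite K]
    {D : Finset (σ → ℕ)} {c : D → K} (h : ∀ y, c ⬝ᵥ monomialVector D y = 0) : c = 0 := by
  classical
  let p : MvPolynomial σ K :=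
    ∑ k : D, MvPolynomial.monomial (Finsupp.equivFunOnFinite.symm k) (c k)
  have hp : p = 0 := MvPolynomial.funext fun y => by
    simpa [p, MvPolynomial.eval_monomial, Finsupp.prod_pow, dotProduct, monomialVector] using h y
  funext k
  simpa [p, MvPolynomial.coeff_sum, MvPolynomial.coeff_monomial] using
    congrArg (MvPolynomial.coeff (Finsupp.equivFunOnFinite.symm k)) hp

theorem span_range_monomialVector [Field K] [Infinite K] (D : Finset (σ → ℕ)) :
    span K (Set.range (monomialVector (K := K) D)) = ⊤ := by
  by_contra hne
  obtain ⟨f, hf0, hf⟩ := exists_le_ker_of_lt_top _ (lt_top_iff_ne_top.2 hne)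
  set c : D → K := fun k => f fun j => if k = j then 1 else 0
  have hfc (v : D → K) : f v = c ⬝ᵥ v := by
    simp [LinearMap.pi_apply_eq_sum_univ f v, dotProduct, c, mul_comm]
  have hc : c = 0 := eq_zero_of_forall_dotProduct_monomialVector_eq_zero fun y => by
    rw [← hfc]
    exact hf (subset_span ⟨y, rfl⟩)
  exact hf0 (LinearMap.ext fun v => by simp [hfc, hc])

variable [DecidableEq σ]

theorem card_piAntidiag_univ (q : ℕ) :
    #(piAntidiag (univ : Finset σ) q) = (Fintype.card σ + q - 1).choose q := by
  rw [← map_sym_eq_piAntidiag, card_map, sym_univ, card_univ, Sym.card_sym_eq_choose]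

def multinomialWeights [CommSemiring K] (q : ℕ) (a : σ → K) : piAntidiag (univ : Finset σ) q → K :=
  fun k => Nat.multinomial univ (k : σ → ℕ) * monomialVector _ a k

theorem dotProduct_pow [CommSemiring K] (q : ℕ) (a y : σ → K) :
    (a ⬝ᵥ y) ^ q = multinomialWeights q a ⬝ᵥ monomialVector (piAntidiag univ q) y := by
  simp only [dotProduct, sum_pow_eq_sum_piAntidiag, multinomialWeights, monomialVector, mul_pow,
    prod_mul_distrib, mul_assoc]
  exact (sum_coe_sort _ _).symm

theorem eq_zero_of_forall_multinomialWeights_dotProduct_eq_zero [CommRing K] [IsDomain K]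
    [CharZero K] {q : ℕ} {v : piAntidiag (univ : Finset σ) q → K}
    (h : ∀ a, multinomialWeights q a ⬝ᵥ v = 0) : v = 0 := by
  have hc : (fun k : piAntidiag univ q => (Nat.multinomial univ (k : σ → ℕ) : K) * v k) = 0 :=
    eq_zero_of_forall_dotProduct_monomialVector_eq_zero fun a => by
      simpa [multinomialWeights, dotProduct, mul_comm, mul_left_comm] using h a
  funext k
  simpa [(Nat.multinomial_pos _ _).ne'] using congrFun hc k

end Monomials

theorem exists_basis_eq_comp_of_span_range_eq_top {K V α : Type*} [Field K] [AddCommGroup V]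
    [Module K V] [FiniteDimensional K V] {v : α → V} (hv : span K (Set.range v) = ⊤) {n : ℕ}
    (hn : finrank K V = n) : ∃ (x : Fin n → α) (b : Basis (Fin n) K V), ⇑b = v ∘ x := by
  let B := Basis.ofSpan hv.ge
  have : Fintype _ := B.fintypeIndexOfRankLtAleph0 (rank_lt_aleph0 K V)
  let e := Fintype.equivFinOfCardEq ((finrank_eq_card_basis B).symm.trans hn)
  choose x hx using fun j => Basis.ofSpan_subset hv.ge (Set.mem_range_self (e.symm j))
  exact ⟨x, B.reindex e, funext fun j => by rw [Basis.reindex_apply, Function.comp_apply, hx]⟩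

section MonomialBasis

variable {σ K : Type*} [Fintype σ] [DecidableEq σ] [Field K] {q n : ℕ} {x : Fin n → σ → K}
  {b : Basis (Fin n) K (piAntidiag (univ : Finset σ) q → K)}

theorem eq_zero_of_forall_dotProduct_pow_eq_zero [CharZero K]
    (hb : ⇑b = monomialVector _ ∘ x) {w : Fin n → K}
    (h : ∀ a, w ⬝ᵥ (fun j => (x j ⬝ᵥ a) ^ q) = 0) : w = 0 := by
  have hw : ∑ j, w j • b j = 0 :=
    eq_zero_of_forall_multinomialWeights_dotProduct_eq_zero fun a => by
      simp only [dotProduct_sum, dotProduct_smul, hb, Function.comp_apply, ← dotProduct_pow,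
        dotProduct_comm a, smul_eq_mul]
      exact h a
  exact funext (Fintype.linearIndependent_iff.mp b.linearIndependent w hw)

theorem injective_mulVecLin_of_basis_eq_comp [LinearOrder K] [IsStrictOrderedRing K] (hq : q ≠ 0)
    (hb : ⇑b = monomialVector _ ∘ x) : Function.Injective (Matrix.of x).mulVecLin := by
  refine (injective_iff_map_eq_zero _).2 fun a ha => ?_
  have hvanish (v : piAntidiag univ q → K) : multinomialWeights q a ⬝ᵥ v = 0 := by
    rw [← b.sum_repr v, dotProduct_sum]
    refine sum_eq_zero fun j _ => ?_
    rw [dotProduct_smul, hb, Function.comp_apply, ← dotProduct_pow, dotProduct_comm]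
    simp [show x j ⬝ᵥ a = 0 from congrFun ha j, hq]
  have := hvanish (monomialVector _ a)
  rwa [← dotProduct_pow, pow_eq_zero_iff hq, dotProduct_self_eq_zero] at this

end MonomialBasis

theorem surjective_of_forall_sum_mul_eq_dotProduct {ι κ α R : Type*} [Fintype ι] [Fintype κ]
    [CommRing R] {g : α → ι → R} (hg : ∀ w : ι → R, (∀ a, w ⬝ᵥ g a = 0) → w = 0)
    {μ : ι → R} (hμ : ∀ j, μ j ≠ 0) {η : κ → ι} {lam : κ → R}
    (h : ∀ a, ∑ ν, lam ν * g a (η ν) = μ ⬝ᵥ g a) : Function.Surjective η := by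
  classical
  intro j₀
  by_contra! hj₀
  have hw : ∑ ν, lam ν • Pi.single (η ν) 1 - μ = 0 := hg _ fun a => by
    simp [sub_dotProduct, sum_dotProduct, h]
  have := congrFun hw j₀
  simp [hj₀, hμ] at this

theorem exact_weighted_discretization_sharp_general
    (q N : ℕ) (hq0 : 0 < q) (hqe : Even q) :
    ∃ X : Submodule ℝ (Fin ((N + q - 1).choose q) → ℝ),
      Module.finrank ℝ X = N ∧
      ∀ m < (N + q - 1).choose q,
        ¬ ∃ (η : Fin m → Fin ((N + q - 1).choose q)) (lam : Fin m → ℝ),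
            ∀ f ∈ X,
              (∑ ν, lam ν * |f (η ν)| ^ q) =
                (1 / ((N + q - 1).choose q : ℝ)) * ∑ j, |f j| ^ q := by
  obtain ⟨x, b, hb⟩ := exists_basis_eq_comp_of_span_range_eq_top
    (span_range_monomialVector (K := ℝ) (piAntidiag (univ : Finset (Fin N)) q))
    (by rw [finrank_fintype_fun_eq_card, Fintype.card_coe, card_piAntidiag_univ, Fintype.card_fin])
  refine ⟨LinearMap.range (Matrix.of x).mulVecLin, ?_, fun m hm ⟨η, lam, h⟩ => ?_⟩
  · rw [LinearMap.finrank_range_of_inj (injective_mulVecLin_of_basis_eq_comp hq0.ne' hb),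
      finrank_fin_fun]
  · have hM : ((N + q - 1).choose q : ℝ) ≠ 0 := Nat.cast_ne_zero.2 (by omega)
    have hη : Function.Surjective η := surjective_of_forall_sum_mul_eq_dotProduct
      (g := fun a j => (x j ⬝ᵥ a) ^ q) (fun _ => eq_zero_of_forall_dotProduct_pow_eq_zero hb)
      (fun _ => one_div_ne_zero hM) fun a => by
        simpa [hqe.pow_abs, dotProduct, mul_sum, mulVec] using h _ (LinearMap.mem_range_self _ a)
    exact hm.not_ge (by simpa using Fintype.card_le_of_surjective η hη)

/-- **Sharpness of the number of nodes in exact weighted discretization** (Theorem gfT2).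
Let `q` be an even positive integer, `N ∈ ℕ`, and `M := (N+q-1).choose q`.
There exist a discrete set `Ω_M` of `M` distinct points (modeled as `Fin M`), carrying the
uniform probability measure (so `∫ |f|^q dμ = (1/M) ∑_j |f j|^q`), and an `N`-dimensional
subspace `X` of real functions on `Ω_M` such that no exact weighted discretization formula
with `m < M` nodes exists for `X`. -/
theorem exact_weighted_discretization_sharp
    (q N : ℕ) (hq0 : 0 < q) (hqe : Even q) (hN : 0 < N) :
    ∃ X : Submodule ℝ (Fin ((N + q - 1).choose q) → ℝ),
      Module.finrank ℝ X = N ∧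
      ∀ m < (N + q - 1).choose q,
        ¬ ∃ (η : Fin m → Fin ((N + q - 1).choose q)) (lam : Fin m → ℝ),
            ∀ f ∈ X,
              (∑ ν, lam ν * |f (η ν)| ^ q) =
                (1 / ((N + q - 1).choose q : ℝ)) * ∑ j, |f j| ^ q :=
  exact_weighted_discretization_sharp_general q N hq0 hqe
end

section
/- Let 1 ≤ q < ∞ and suppose q is not an even integer. Let X_2 := {t ↦ α·sin t + β·cos t : α, β ∈ ℝ}, a two-dimensional subspace of functions on the circle [0,2π). Then for every m ∈ ℕ there do not exist points ξ^1,…,ξ^m ∈ [0,2π) and real weights λ_1,…,λ_m such that (1/2π)·∫_0^{2π} |f(t)|^q dt = Σ_{ν=1}^m λ_ν |f(ξ^ν)|^q for all f ∈ X_2. -/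
/-!
Put `β = 1`. Rotation invariance turns the left-hand side into `c (α² + 1)^(q/2)` with
`c > 0`, a smooth function of `α`, while each node contributes `λ |α sin ξ + cos ξ|^q`, which
for `sin ξ ≠ 0` is a multiple of `|α - t|^q` with `t = -cot ξ`. For `q` not an even integer,
`|x|^q` is not smooth at `0` (some derivative blows up or jumps there), so the weights of the
nodes sharing the same singular point `t` must cancel. Hence the sum is constant in `α`,
whereas `(α² + 1)^(q/2)` is not.
-/

open MeasureTheory Real Filter Topology
open scoped ContDiff

lemma ContDiffAt.continuousAt_iteratedDeriv {𝕜 F : Type*} [NontriviallyNormedField 𝕜]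
    [NormedAddCommGroup F] [NormedSpace 𝕜 F] {f : 𝕜 → F} {x : 𝕜} {n : WithTop ℕ∞} {k : ℕ}
    (h : ContDiffAt 𝕜 n f x) (hk : k ≤ n) : ContinuousAt (iteratedDeriv k f) x := by
  rw [show iteratedDeriv k f = fun y => iteratedFDeriv 𝕜 k f y (fun _ => 1) from
    funext fun y => iteratedDeriv_eq_iteratedFDeriv]
  exact (continuous_eval_const _).continuousAt.comp (h.continuousAt_iteratedFDeriv hk)

lemma iteratedDeriv_abs_rpow_of_pos (q : ℝ) (n : ℕ) {x : ℝ} (hx : 0 < x) :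
    iteratedDeriv n (fun y : ℝ => |y| ^ q) x = (∏ i ∈ Finset.range n, (q - i)) * x ^ (q - n) := by
  induction n generalizing x with
  | zero => simp [abs_of_pos hx]
  | succ n ih =>
    have hev : iteratedDeriv n (fun y : ℝ => |y| ^ q)
        =ᶠ[𝓝 x] fun y => (∏ i ∈ Finset.range n, (q - i)) * y ^ (q - n) :=
      eventually_gt_nhds hx |>.mono fun y hy => ih hy
    rw [iteratedDeriv_succ, hev.deriv_eq,
      ((hasDerivAt_rpow_const (Or.inl hx.ne')).const_mul _).deriv, Finset.prod_range_succ]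
    push_cast
    ring_nf

lemma iteratedDeriv_abs_rpow_of_neg (q : ℝ) (n : ℕ) {x : ℝ} (hx : x < 0) :
    iteratedDeriv n (fun y : ℝ => |y| ^ q) x
      = (-1) ^ n * ((∏ i ∈ Finset.range n, (q - i)) * (-x) ^ (q - n)) := by
  have := iteratedDeriv_comp_neg n (fun y : ℝ => |y| ^ q) x
  simp only [abs_neg] at this
  rw [this, smul_eq_mul, iteratedDeriv_abs_rpow_of_pos q n (neg_pos.2 hx)]

lemma not_contDiffAt_abs_rpow_of_ne_natCast {q : ℝ} (hq : ∀ n : ℕ, q ≠ n) :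
    ¬ ContDiffAt ℝ ∞ (fun y : ℝ => |y| ^ q) 0 := by
  intro h
  set n := ⌈q⌉₊
  have hqn : q < n := (Nat.le_ceil q).lt_of_ne (hq n)
  have hP : (∏ i ∈ Finset.range n, (q - i)) ≠ 0 :=
    Finset.prod_ne_zero_iff.2 fun i _ => sub_ne_zero.2 (hq i)
  have hbounded : Tendsto (fun x => |iteratedDeriv n (fun y : ℝ => |y| ^ q) x|) (𝓝[>] 0)
      (𝓝 |iteratedDeriv n (fun y : ℝ => |y| ^ q) 0|) :=
    (h.continuousAt_iteratedDeriv (mod_cast le_top)).abs.continuousWithinAt.tendsto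
  have hblowup : Tendsto (fun x : ℝ => x ^ (q - n)) (𝓝[>] 0) atTop := by
    refine ((tendsto_rpow_atTop (sub_pos.2 hqn)).comp tendsto_inv_nhdsGT_zero).congr' ?_
    filter_upwards [self_mem_nhdsWithin] with x hx
    rw [Function.comp_apply, inv_rpow hx.out.le, ← rpow_neg hx.out.le, neg_sub]
  refine not_tendsto_nhds_of_tendsto_atTop ?_ _ hbounded
  refine (hblowup.const_mul_atTop (abs_pos.2 hP)).congr' ?_
  filter_upwards [self_mem_nhdsWithin] with x hx
  rw [iteratedDeriv_abs_rpow_of_pos q n hx, abs_mul, abs_of_pos (rpow_pos_of_pos hx _)]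

lemma not_contDiffAt_abs_rpow_of_odd {n : ℕ} (hn : Odd n) :
    ¬ ContDiffAt ℝ ∞ (fun y : ℝ => |y| ^ (n : ℝ)) 0 := by
  intro h
  set P := ∏ i ∈ Finset.range n, ((n : ℝ) - i)
  have hP : 0 < P :=
    Finset.prod_pos fun i hi => sub_pos.2 (by exact_mod_cast Finset.mem_range.1 hi)
  have hright : iteratedDeriv n (fun y : ℝ => |y| ^ (n : ℝ)) =ᶠ[𝓝[>] 0] fun _ => P := by
    filter_upwards [self_mem_nhdsWithin] with x hx
    rw [iteratedDeriv_abs_rpow_of_pos _ n hx, sub_self, rpow_zero, mul_one]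
  have hleft : iteratedDeriv n (fun y : ℝ => |y| ^ (n : ℝ)) =ᶠ[𝓝[<] 0] fun _ => -P := by
    filter_upwards [self_mem_nhdsWithin] with x hx
    rw [iteratedDeriv_abs_rpow_of_neg _ n hx, sub_self, rpow_zero, mul_one, hn.neg_one_pow,
      neg_one_mul]
  have hcont := h.continuousAt_iteratedDeriv (k := n) (mod_cast le_top)
  have h1 := tendsto_nhds_unique hcont.continuousWithinAt.tendsto
    (tendsto_const_nhds.congr' hright.symm)
  have h2 := tendsto_nhds_unique hcont.continuousWithinAt.tendsto
    (tendsto_const_nhds.congr' hleft.symm)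
  linarith

lemma not_contDiffAt_abs_rpow {q : ℝ} (hq : ¬ ∃ k : ℕ, Even k ∧ q = k) :
    ¬ ContDiffAt ℝ ∞ (fun y : ℝ => |y| ^ q) 0 := by
  by_cases hnat : ∃ n : ℕ, q = n
  · obtain ⟨n, rfl⟩ := hnat
    exact not_contDiffAt_abs_rpow_of_odd (Nat.not_even_iff_odd.1 fun he => hq ⟨n, he, rfl⟩)
  · exact not_contDiffAt_abs_rpow_of_ne_natCast fun n hn => hnat ⟨n, hn⟩

lemma eq_zero_of_contDiffAt_mul_abs_sub_rpow {q μ t : ℝ} (hq : ¬ ∃ k : ℕ, Even k ∧ q = k)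
    (h : ContDiffAt ℝ ∞ (fun x => μ * |x - t| ^ q) t) : μ = 0 := by
  by_contra hμ
  refine not_contDiffAt_abs_rpow hq ?_
  have hshift : ContDiffAt ℝ ∞ (fun y : ℝ => μ * |y + t - t| ^ q) 0 :=
    ContDiffAt.comp (f := fun y => y + t) 0 (by rwa [zero_add])
      (contDiffAt_id.add contDiffAt_const)
  simpa [hμ] using (contDiffAt_const (c := μ⁻¹)).mul hshift

lemma contDiffAt_abs_sub_rpow {q t x : ℝ} (h : x ≠ t) :
    ContDiffAt ℝ ∞ (fun y => |y - t| ^ q) x := by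
  have hx : x - t ≠ 0 := sub_ne_zero.2 h
  exact ContDiffAt.rpow_const_of_ne (f := fun y => |y - t|)
    ((contDiffAt_abs hx).comp x (contDiffAt_id.sub contDiffAt_const)) (abs_ne_zero.2 hx)

section SumAbsRpow

variable {ι : Type*} {q : ℝ} (s : Finset ι)

lemma sum_mul_abs_sub_rpow_eq_zero (hq : ¬ ∃ k : ℕ, Even k ∧ q = k) (w r : ι → ℝ)
    (h : ContDiff ℝ ∞ fun x => ∑ i ∈ s, w i * |x - r i| ^ q) (x : ℝ) :
    ∑ i ∈ s, w i * |x - r i| ^ q = 0 := by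
  classical
  -- Near a node `t`, the nodes at other positions are smooth, so the total weight at `t` vanishes.
  set W : ℝ → ℝ := fun t => ∑ i ∈ s with r i = t, w i
  have hfiber : ∀ x, ∑ i ∈ s, w i * |x - r i| ^ q = ∑ t ∈ s.image r, W t * |x - t| ^ q := by
    intro x
    rw [← Finset.sum_fiberwise_of_maps_to fun i hi => Finset.mem_image_of_mem r hi]
    refine Finset.sum_congr rfl fun t _ => ?_
    rw [Finset.sum_mul]
    exact Finset.sum_congr rfl fun i hi => by rw [(Finset.mem_filter.1 hi).2]
  rw [hfiber]
  refine Finset.sum_eq_zero fun t ht => ?_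
  rw [eq_zero_of_contDiffAt_mul_abs_sub_rpow hq (μ := W t) (t := t) ?_, zero_mul]
  have hrest : (fun x => W t * |x - t| ^ q) = fun x => ∑ i ∈ s, w i * |x - r i| ^ q
      - ∑ u ∈ (s.image r).erase t, W u * |x - u| ^ q := by
    funext x
    rw [hfiber, ← Finset.add_sum_erase _ _ ht, add_sub_cancel_right]
  rw [hrest]
  exact h.contDiffAt.sub <| ContDiffAt.sum fun u hu =>
    contDiffAt_const.mul (contDiffAt_abs_sub_rpow (Finset.ne_of_mem_erase hu).symm)

lemma sum_mul_abs_affine_rpow_eq (hq : ¬ ∃ k : ℕ, Even k ∧ q = k) (w a b : ι → ℝ)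
    (h : ContDiff ℝ ∞ fun x => ∑ i ∈ s, w i * |x * a i + b i| ^ q) (x : ℝ) :
    ∑ i ∈ s, w i * |x * a i + b i| ^ q = ∑ i ∈ s with a i = 0, w i * |b i| ^ q := by
  classical
  have hsplit : ∀ x, ∑ i ∈ s, w i * |x * a i + b i| ^ q = ∑ i ∈ s with a i = 0, w i * |b i| ^ q
      + ∑ i ∈ s with a i ≠ 0, w i * |a i| ^ q * |x - -b i / a i| ^ q := by
    intro x
    rw [← Finset.sum_filter_add_sum_filter_not s fun i => a i = 0]
    congr 1
    · exact Finset.sum_congr rfl fun i hi => by simp [(Finset.mem_filter.1 hi).2]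
    · refine Finset.sum_congr rfl fun i hi => ?_
      have hai : a i ≠ 0 := (Finset.mem_filter.1 hi).2
      rw [show x * a i + b i = a i * (x - -b i / a i) by field_simp; ring, abs_mul,
        mul_rpow (abs_nonneg _) (abs_nonneg _), mul_assoc]
  rw [hsplit, sum_mul_abs_sub_rpow_eq_zero _ hq, add_zero]
  have hrest : (fun x => ∑ i ∈ s with a i ≠ 0, w i * |a i| ^ q * |x - -b i / a i| ^ q)
      = fun x => ∑ i ∈ s, w i * |x * a i + b i| ^ q - ∑ i ∈ s with a i = 0, w i * |b i| ^ q := by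
    funext x
    rw [hsplit, add_sub_cancel_left]
  rw [hrest]
  exact h.sub contDiff_const

end SumAbsRpow

lemma integral_abs_sin_mul_add_cos_mul_rpow (q α β : ℝ) :
    ∫ t in (0 : ℝ)..(2 * π), |α * sin t + β * cos t| ^ q
      = (α ^ 2 + β ^ 2) ^ (q / 2) * ∫ t in (0 : ℝ)..(2 * π), |sin t| ^ q := by
  set z : ℂ := ⟨α, β⟩
  have hz : ∀ t, α * sin t + β * cos t = ‖z‖ * sin (t + z.arg) := by
    intro t
    rw [sin_add]
    linear_combination -(sin t * Complex.norm_mul_cos_arg z + cos t * Complex.norm_mul_sin_arg z)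
  have hnorm : ‖z‖ ^ q = (α ^ 2 + β ^ 2) ^ (q / 2) := by
    rw [Complex.norm_def, Complex.normSq_mk, sqrt_eq_rpow,
      ← rpow_mul (add_nonneg (mul_self_nonneg α) (mul_self_nonneg β))]
    ring_nf
  have hper : Function.Periodic (fun t => |sin t| ^ q) (2 * π) := fun t => by simp
  simp_rw [hz, abs_mul, abs_norm, mul_rpow (norm_nonneg _) (abs_nonneg _)]
  rw [intervalIntegral.integral_const_mul, hnorm,
    intervalIntegral.integral_comp_add_right (fun t => |sin t| ^ q), zero_add,
    add_comm (2 * π), hper.intervalIntegral_add_eq z.arg 0, zero_add]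

lemma integral_abs_sin_rpow_pos {q : ℝ} (hq : 0 ≤ q) :
    0 < ∫ t in (0 : ℝ)..(2 * π), |sin t| ^ q := by
  have hcont : Continuous fun t => |sin t| ^ q := continuous_sin.abs.rpow_const fun _ => Or.inr hq
  rw [← intervalIntegral.integral_add_adjacent_intervals (b := π) (hcont.intervalIntegrable _ _)
    (hcont.intervalIntegrable _ _)]
  refine add_pos_of_pos_of_nonneg ?_ ?_
  · exact intervalIntegral.intervalIntegral_pos_of_pos_on (hcont.intervalIntegrable _ _)
      (fun t ht => rpow_pos_of_pos (abs_pos.2 (sin_pos_of_pos_of_lt_pi ht.1 ht.2).ne') _) pi_pos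
  · exact intervalIntegral.integral_nonneg (by linarith [pi_pos]) fun t _ => by positivity

/-- **No exact weighted discretization in `L_q` for non-even `q`** for
`X_2 = span{sin, cos}` on the circle `[0,2π)` with normalized Lebesgue measure:
if `1 ≤ q < ∞` is not an even integer, then for every `m` there are no nodes
`ξ^1,…,ξ^m ∈ [0,2π)` and real weights `λ_1,…,λ_m` with
`(1/2π)·∫_0^{2π} |α sin t + β cos t|^q dt = ∑_ν λ_ν |α sin ξ^ν + β cos ξ^ν|^q`
for all `α, β ∈ ℝ`. -/
theorem no_exact_weighted_discretization_noneven
    (q : ℝ) (hq : 1 ≤ q) (hqne : ¬ ∃ k : ℤ, Even k ∧ q = (k : ℝ)) (m : ℕ) :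
    ¬ ∃ (ξ : Fin m → ℝ) (lam : Fin m → ℝ),
        (∀ ν, ξ ν ∈ Set.Ico (0 : ℝ) (2 * π)) ∧
        ∀ α β : ℝ,
          (1 / (2 * π)) * (∫ t in (0:ℝ)..(2 * π), |α * Real.sin t + β * Real.cos t| ^ q)
            = ∑ ν, lam ν * |α * Real.sin (ξ ν) + β * Real.cos (ξ ν)| ^ q := by
  rintro ⟨ξ, lam, -, hdisc⟩
  have hqne' : ¬ ∃ k : ℕ, Even k ∧ q = k := fun ⟨k, hk, hqk⟩ =>
    hqne ⟨k, (Int.even_coe_nat k).2 hk, mod_cast hqk⟩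
  set c := 1 / (2 * π) * ∫ t in (0 : ℝ)..(2 * π), |sin t| ^ q
  have hc : 0 < c := mul_pos (by positivity) (integral_abs_sin_rpow_pos (by linarith))
  have hF : ∀ α, ∑ ν, lam ν * |α * sin (ξ ν) + cos (ξ ν)| ^ q = c * (α ^ 2 + 1) ^ (q / 2) := by
    intro α
    have := (hdisc α 1).symm
    rw [integral_abs_sin_mul_add_cos_mul_rpow] at this
    simp only [one_mul, one_pow] at this
    rw [this]
    ring
  have hsmooth : ContDiff ℝ ∞ fun α => ∑ ν, lam ν * |α * sin (ξ ν) + cos (ξ ν)| ^ q := by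
    simp_rw [hF]
    exact contDiff_const.mul <|
      ((contDiff_id.pow 2).add contDiff_const).rpow_const_of_ne fun α => by positivity
  have hconst := sum_mul_abs_affine_rpow_eq Finset.univ hqne' lam _ _ hsmooth
  have h01 : c * (0 ^ 2 + 1) ^ (q / 2) = c * (1 ^ 2 + 1) ^ (q / 2) := by
    rw [← hF, ← hF, hconst, hconst]
  have h2q : (1 : ℝ) < 2 ^ (q / 2) := one_lt_rpow (by norm_num) (by linarith)
  norm_num at h01
  nlinarith
end

section
/- Let (Ω, μ) be a measure space and let u_1,…,u_N : Ω → ℝ be a linearly independent system of μ-integrable functions. Then there exist points ξ^1,…,ξ^N ∈ Ω and real weights λ_1,…,λ_N such that ∫_Ω f dμ = Σ_{j=1}^N λ_j f(ξ^j) for every f ∈ X_N := span(u_1,…,u_N). -/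
open MeasureTheory

/-- **Exact numerical integration with `N` nodes** (Proposition gfP2).
If `u_1,…,u_N : Ω → ℝ` is a linearly independent system of `μ`-integrable functions,
then there exist nodes `ξ^1,…,ξ^N ∈ Ω` and real weights `λ_1,…,λ_N` such that
`∫_Ω f dμ = ∑_j λ_j f(ξ^j)` for every `f ∈ span(u_1,…,u_N)`. -/
theorem exact_cubature_of_linearIndependent
    {Ω : Type*} [MeasurableSpace Ω] (μ : Measure Ω) (N : ℕ)
    (u : Fin N → Ω → ℝ) (hli : LinearIndependent ℝ u)
    (hint : ∀ i, Integrable (u i) μ) :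
    ∃ (ξ : Fin N → Ω) (lam : Fin N → ℝ),
      ∀ f ∈ Submodule.span ℝ (Set.range u),
        ∫ x, f x ∂μ = ∑ j, lam j * f (ξ j) := by
  classical
  set V : Ω → (Fin N → ℝ) := fun x i => u i x with hV
  -- Step 1: the vectors `V x` span `ℝ^N`.
  have hspan : Submodule.span ℝ (Set.range V) = ⊤ := by
    by_contra hne
    obtain ⟨φ, hφ0, hφ⟩ :=
      (Submodule.span ℝ (Set.range V)).exists_dual_map_eq_bot_of_lt_top
        (lt_top_iff_ne_top.mpr hne) inferInstance
    set c : Fin N → ℝ := fun i => φ (Pi.basisFun ℝ (Fin N) i) with hc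
    have hker : ∀ x : Ω, φ (V x) = 0 := by
      intro x
      have : V x ∈ Submodule.span ℝ (Set.range V) :=
        Submodule.subset_span ⟨x, rfl⟩
      have : φ (V x) ∈ (Submodule.span ℝ (Set.range V)).map φ :=
        Submodule.mem_map_of_mem this
      rw [hφ] at this
      simpa using this
    have hrep : ∀ v : Fin N → ℝ, φ v = ∑ i, c i * v i := by
      intro v
      have := (Pi.basisFun ℝ (Fin N)).sum_repr v
      conv_lhs => rw [← this]
      simp [c, mul_comm]
    have hcomb : ∑ i, c i • u i = 0 := by
      funext x
      have := hker x
      rw [hrep] at this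
      simpa [V] using this
    have : ∀ i, c i = 0 := by
      exact Fintype.linearIndependent_iff.mp hli c hcomb
    apply hφ0
    apply (Pi.basisFun ℝ (Fin N)).ext
    intro i
    simpa [c] using this i
  -- Step 2: extract a basis from the spanning set.
  obtain ⟨b, hbsub, hbspan, hbli⟩ := exists_linearIndependent ℝ (Set.range V)
  rw [hspan] at hbspan
  have hfin : b.Finite := hbli.setFinite
  haveI : Fintype b := hfin.fintype
  have hcard : Fintype.card b = N := by
    have := Module.finrank_eq_card_basis (Module.Basis.mk hbli (by rw [Subtype.range_coe, hbspan]))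
    simpa using this.symm
  obtain ⟨e⟩ : Nonempty (Fin N ≃ b) :=
    ⟨(Fintype.equivFinOfCardEq hcard).symm⟩
  -- the nodes
  have hmem : ∀ j : Fin N, ((e j : Fin N → ℝ)) ∈ Set.range V := fun j => hbsub (e j).2
  choose ξ hξ using hmem
  have hVξ : ∀ j, V (ξ j) = (e j : Fin N → ℝ) := hξ
  have hrange : Set.range (fun j => V (ξ j)) = b := by
    ext v
    constructor
    · rintro ⟨j, rfl⟩; simpa only [hVξ j] using (e j).2
    · intro hv
      exact ⟨e.symm ⟨v, hv⟩, by simp only [hVξ]; simp⟩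
  have hspanξ : Submodule.span ℝ (Set.range fun j => V (ξ j)) = ⊤ := by
    rw [hrange, hbspan]
  -- Step 3: solve for the weights.
  have hI : (fun i => ∫ x, u i x ∂μ) ∈
      Submodule.span ℝ (Set.range fun j => V (ξ j)) := by
    rw [hspanξ]; trivial
  obtain ⟨lam, hlam⟩ := (Finsupp.mem_span_range_iff_exists_finsupp).mp hI
  refine ⟨ξ, fun j => lam j, ?_⟩
  have hbase : ∀ i, ∫ x, u i x ∂μ = ∑ j, lam j * u i (ξ j) := by
    intro i
    have := congrFun hlam i
    rw [← this]
    rw [Finsupp.sum_fintype]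
    · simp [V]
    · intro j; simp
  -- Step 4: extend by linearity over the span.
  intro f hf
  have key : ∀ f ∈ Submodule.span ℝ (Set.range u),
      Integrable f μ ∧ ∫ x, f x ∂μ = ∑ j, lam j * f (ξ j) := by
    intro f hf
    induction hf using Submodule.span_induction with
    | mem g hg =>
      obtain ⟨i, rfl⟩ := hg
      exact ⟨hint i, hbase i⟩
    | zero => exact ⟨integrable_zero _ _ _, by simp⟩
    | add g h hg hh ihg ihh =>
      refine ⟨ihg.1.add ihh.1, ?_⟩
      have : ∫ x, (g + h) x ∂μ = ∫ x, g x ∂μ + ∫ x, h x ∂μ := by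
        simpa using integral_add ihg.1 ihh.1
      rw [this, ihg.2, ihh.2, ← Finset.sum_add_distrib]
      simp [mul_add]
    | smul a g hg ihg =>
      refine ⟨ihg.1.smul a, ?_⟩
      have : ∫ x, (a • g) x ∂μ = a * ∫ x, g x ∂μ := by
        simpa using integral_smul a g
      rw [this, ihg.2, Finset.mul_sum]
      exact Finset.sum_congr rfl fun j _ => by simp [smul_eq_mul]; ring
  exact (key f hf).2
end

section
/- Let N be a positive integer and let Q := {j² : j = 1,2,…,N} ∪ {0, 1, 2, …, 2N} ⊂ ℤ. Assume there exist points x_1,…,x_m ∈ [0,2π) and real numbers λ_1,…,λ_m such that (1/2π)·∫_0^{2π} |f(x)|² dx = Σ_{j=1}^m λ_j |f(x_j)|² for every f ∈ 𝒯(Q). Then m ≥ N², and consequently m ≥ (|Q|−1)²/9. -/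
open MeasureTheory Real

/-- The set `𝒯(Q)` of univariate trigonometric polynomials with frequencies in the
finite set `Q ⊂ ℤ`. -/
def trig1 (Q : Finset ℤ) : Set (ℝ → ℂ) :=
  {f | ∃ c : ℤ → ℂ,
        ∀ x : ℝ, f x = ∑ k ∈ Q, c k * Complex.exp (Complex.I * (k : ℂ) * (x : ℂ))}

/-!
Testing the exactness identity on `e_p + u e_q` (`p, q ∈ Q`, `|u| = 1`) shows that the
discrete moments `S(d) = ∑ λ_j e^{i d x_j}` coincide with the moments `δ_{d,0}` of `μ` for
every `d ∈ Q - Q`. Every `0 < d ≤ N²` is such a difference, `d = j² - r` with `j = ⌈√d⌉ ≤ N`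
and `0 ≤ r ≤ 2N`. Hence the `(N² + 1) × m` matrix `(λ_j e^{i p x_j})` has the right inverse
`(e^{-i q x_j})`, which forces `m ≥ N² + 1`; and `|Q| ≤ 3N + 1` gives the second bound.
-/

open ComplexConjugate

noncomputable def fourierExp (k : ℤ) (t : ℝ) : ℂ := Complex.exp (Complex.I * k * t)

lemma fourierExp_mem_trig1 {Q : Finset ℤ} {k : ℤ} (hk : k ∈ Q) : fourierExp k ∈ trig1 Q :=
  ⟨fun l => if l = k then 1 else 0, fun t => by simp [fourierExp, hk]⟩

lemma add_mem_trig1 {Q : Finset ℤ} {f g : ℝ → ℂ} (hf : f ∈ trig1 Q) (hg : g ∈ trig1 Q) :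
    (fun t => f t + g t) ∈ trig1 Q := by
  obtain ⟨c, hc⟩ := hf
  obtain ⟨d, hd⟩ := hg
  exact ⟨c + d, fun t => by simp [hc, hd, add_mul, Finset.sum_add_distrib]⟩

lemma const_mul_mem_trig1 {Q : Finset ℤ} {f : ℝ → ℂ} (u : ℂ) (hf : f ∈ trig1 Q) :
    (fun t => u * f t) ∈ trig1 Q := by
  obtain ⟨c, hc⟩ := hf
  exact ⟨u • c, fun t => by simp [hc, Finset.mul_sum, mul_assoc]⟩

lemma norm_fourierExp (k : ℤ) (t : ℝ) : ‖fourierExp k t‖ = 1 := by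
  rw [fourierExp, Complex.norm_exp]
  simp

lemma fourierExp_mul_conj (p q : ℤ) (t : ℝ) :
    fourierExp p t * conj (fourierExp q t) = fourierExp (p - q) t := by
  simp only [fourierExp, ← Complex.exp_conj, ← Complex.exp_add, map_mul, Complex.conj_I,
    map_intCast, Complex.conj_ofReal]
  push_cast
  ring_nf

lemma continuous_fourierExp (k : ℤ) : Continuous (fourierExp k) := by
  unfold fourierExp
  fun_prop

lemma integral_fourierExp (d : ℤ) :
    ∫ t in (0:ℝ)..(2 * π), fourierExp d t = 2 * π * if d = 0 then 1 else 0 := by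
  split_ifs with hd
  · simp [fourierExp, hd]
  · have hc : Complex.I * d ≠ 0 := mul_ne_zero Complex.I_ne_zero (by exact_mod_cast hd)
    simp only [fourierExp, integral_exp_mul_complex hc]
    have : Complex.I * d * ((2 * π : ℝ) : ℂ) = d * (2 * π * Complex.I) := by push_cast; ring
    rw [this, Complex.exp_int_mul_two_pi_mul_I]
    simp

lemma norm_sq_fourierExp_add_mul (p q : ℤ) {u : ℂ} (hu : ‖u‖ = 1) (t : ℝ) :
    ‖fourierExp p t + u * fourierExp q t‖ ^ 2 = 2 + 2 * (conj u * fourierExp (p - q) t).re := by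
  rw [← Complex.normSq_eq_norm_sq, Complex.normSq_add, Complex.normSq_eq_norm_sq,
    Complex.normSq_eq_norm_sq, norm_mul, hu, norm_fourierExp, norm_fourierExp, map_mul,
    ← fourierExp_mul_conj]
  ring_nf

def IsExactL2Discretization (Q : Finset ℤ) {m : ℕ} (x lam : Fin m → ℝ) : Prop :=
  ∀ f ∈ trig1 Q,
    (1 / (2 * π)) * (∫ t in (0:ℝ)..(2 * π), ‖f t‖ ^ 2) = ∑ j, lam j * ‖f (x j)‖ ^ 2

noncomputable def weightedMoment {m : ℕ} (x lam : Fin m → ℝ) (d : ℤ) : ℂ :=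
  ∑ j, (lam j : ℂ) * fourierExp d (x j)

lemma average_norm_sq_fourierExp_add_mul (p q : ℤ) {u : ℂ} (hu : ‖u‖ = 1) :
    (1 / (2 * π)) * (∫ t in (0:ℝ)..(2 * π), ‖fourierExp p t + u * fourierExp q t‖ ^ 2)
      = 2 + 2 * (conj u * if p - q = 0 then 1 else 0).re := by
  have hcont : Continuous fun t => conj u * fourierExp (p - q) t :=
    continuous_const.mul (continuous_fourierExp _)
  have hcont_int := hcont.intervalIntegrable (μ := volume) 0 (2 * π)
  have hre : Continuous fun t => (conj u * fourierExp (p - q) t).re :=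
    Complex.continuous_re.comp hcont
  have hint_re : ∫ t in (0:ℝ)..(2 * π), (conj u * fourierExp (p - q) t).re
      = 2 * π * (conj u * if p - q = 0 then 1 else 0).re := by
    rw [← Complex.re_ofReal_mul]
    refine (intervalIntegral.intervalIntegral_re hcont_int).trans ?_
    rw [intervalIntegral.integral_const_mul, integral_fourierExp]
    push_cast
    ring_nf
    rfl
  simp_rw [norm_sq_fourierExp_add_mul p q hu]
  rw [intervalIntegral.integral_add intervalIntegrable_const
      ((hre.const_mul 2).intervalIntegrable _ _),
    intervalIntegral.integral_const_mul, hint_re, intervalIntegral.integral_const, smul_eq_mul,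
    sub_zero]
  field_simp

lemma sum_mul_norm_sq_fourierExp_add_mul {m : ℕ} (x lam : Fin m → ℝ) (p q : ℤ) {u : ℂ}
    (hu : ‖u‖ = 1) :
    ∑ j, lam j * ‖fourierExp p (x j) + u * fourierExp q (x j)‖ ^ 2
      = 2 * ∑ j, lam j + 2 * (conj u * weightedMoment x lam (p - q)).re := by
  simp only [norm_sq_fourierExp_add_mul p q hu, weightedMoment, Finset.mul_sum, Complex.re_sum,
    ← Finset.sum_add_distrib, mul_left_comm (conj u), Complex.re_ofReal_mul]
  exact Finset.sum_congr rfl fun j _ => by ring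

namespace IsExactL2Discretization

variable {Q : Finset ℤ} {m : ℕ} {x lam : Fin m → ℝ}

lemma re_conj_mul_weightedMoment (h : IsExactL2Discretization Q x lam) {p q : ℤ} (hp : p ∈ Q)
    (hq : q ∈ Q) {u : ℂ} (hu : ‖u‖ = 1) :
    1 + (conj u * if p - q = 0 then 1 else 0).re
      = ∑ j, lam j + (conj u * weightedMoment x lam (p - q)).re := by
  have := h (fun t => fourierExp p t + u * fourierExp q t)
    (add_mem_trig1 (fourierExp_mem_trig1 hp) (const_mul_mem_trig1 u (fourierExp_mem_trig1 hq)))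
  rw [average_norm_sq_fourierExp_add_mul p q hu,
    sum_mul_norm_sq_fourierExp_add_mul x lam p q hu] at this
  linarith

lemma weightedMoment_sub (h : IsExactL2Discretization Q x lam) {p q : ℤ} (hp : p ∈ Q)
    (hq : q ∈ Q) : weightedMoment x lam (p - q) = if p - q = 0 then 1 else 0 := by
  -- `u = ±1` give `∑ λ_j = 1` and the real part, `u = i` the imaginary part.
  have h1 := h.re_conj_mul_weightedMoment hp hq (u := 1) (by simp)
  have hneg := h.re_conj_mul_weightedMoment hp hq (u := -1) (by simp)
  have hI := h.re_conj_mul_weightedMoment hp hq (u := Complex.I) (by simp)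
  set δ : ℂ := if p - q = 0 then 1 else 0
  simp only [map_one, map_neg, Complex.conj_I, one_mul, neg_mul, Complex.neg_re,
    Complex.mul_re, Complex.I_re, Complex.I_im] at h1 hneg hI
  apply Complex.ext <;> linarith

end IsExactL2Discretization

lemma Matrix.card_le_card_of_mul_eq_one {R m n : Type*} [CommSemiring R] [StrongRankCondition R]
    [Fintype m] [Fintype n] [DecidableEq m] {A : Matrix m n R} {B : Matrix n m R}
    (h : A * B = 1) : Fintype.card m ≤ Fintype.card n := by
  simpa [h] using (Matrix.rank_mul_le_left A B).trans A.rank_le_card_width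

lemma card_le_of_weightedMoment_sub {m : ℕ} (x lam : Fin m → ℝ) (D : Finset ℤ)
    (hD : ∀ p ∈ D, ∀ q ∈ D, weightedMoment x lam (p - q) = if p - q = 0 then 1 else 0) :
    D.card ≤ m := by
  let A : Matrix D (Fin m) ℂ := Matrix.of fun p j => lam j * fourierExp p (x j)
  let B : Matrix (Fin m) D ℂ := Matrix.of fun j q => conj (fourierExp q (x j))
  have hAB : A * B = 1 := by
    ext p q
    simp only [A, B, Matrix.mul_apply, Matrix.of_apply, mul_assoc, fourierExp_mul_conj]
    rw [← weightedMoment, hD p p.2 q q.2]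
    simp only [Matrix.one_apply, sub_eq_zero, ← Subtype.ext_iff]
  simpa using Matrix.card_le_card_of_mul_eq_one hAB

def quadraticFrequencies (N : ℕ) : Finset ℤ :=
  (Finset.Icc 1 N).image (fun j : ℕ => (j : ℤ) ^ 2) ∪
    (Finset.range (2 * N + 1)).image (fun j : ℕ => (j : ℤ))

lemma natCast_mem_quadraticFrequencies {N n : ℕ} (hn : n ≤ 2 * N) :
    (n : ℤ) ∈ quadraticFrequencies N :=
  Finset.mem_union_right _ (Finset.mem_image_of_mem _ (Finset.mem_range.mpr (by omega)))

lemma sq_mem_quadraticFrequencies {N j : ℕ} (hj : 1 ≤ j) (hjN : j ≤ N) :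
    (j : ℤ) ^ 2 ∈ quadraticFrequencies N :=
  Finset.mem_union_left _ (Finset.mem_image_of_mem _ (Finset.mem_Icc.mpr ⟨hj, hjN⟩))

/-- With `j = ⌈√n⌉` we have `n ≤ j² < n + 2j - 1`, so `n = j² - (j² - n)` with
`j² - n ≤ 2N`. -/
lemma exists_natCast_eq_sub_quadraticFrequencies {N n : ℕ} (hn : n ≤ N ^ 2) :
    ∃ a ∈ quadraticFrequencies N, ∃ b ∈ quadraticFrequencies N, a - b = n := by
  rcases Nat.eq_zero_or_pos n with rfl | hn0
  · exact ⟨0, natCast_mem_quadraticFrequencies (Nat.zero_le _), 0,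
      natCast_mem_quadraticFrequencies (Nat.zero_le _), by simp⟩
  set s := Nat.sqrt (n - 1)
  have hlt : n - 1 < (s + 1) * (s + 1) := Nat.lt_succ_sqrt (n - 1)
  have hle : s * s ≤ n - 1 := Nat.sqrt_le (n - 1)
  have hsN : s < N := by
    by_contra! h
    have := Nat.mul_le_mul h h
    rw [sq] at hn
    omega
  have hsq : (s + 1) * (s + 1) = s * s + 2 * s + 1 := by ring
  refine ⟨((s + 1 : ℕ) : ℤ) ^ 2, sq_mem_quadraticFrequencies (by omega) hsN,
    (((s + 1) * (s + 1) - n : ℕ) : ℤ), natCast_mem_quadraticFrequencies (by omega), ?_⟩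
  push_cast [Nat.cast_sub (by omega : n ≤ (s + 1) * (s + 1))]
  ring

lemma exists_eq_sub_quadraticFrequencies {N : ℕ} {d : ℤ} (hd : d.natAbs ≤ N ^ 2) :
    ∃ a ∈ quadraticFrequencies N, ∃ b ∈ quadraticFrequencies N, a - b = d := by
  obtain ⟨a, ha, b, hb, hab⟩ := exists_natCast_eq_sub_quadraticFrequencies hd
  rcases Int.natAbs_eq d with h | h
  · exact ⟨a, ha, b, hb, by omega⟩
  · exact ⟨b, hb, a, ha, by omega⟩

lemma card_quadraticFrequencies_le (N : ℕ) : (quadraticFrequencies N).card ≤ 3 * N + 1 :=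
  calc (quadraticFrequencies N).card
      ≤ (Finset.Icc 1 N).card + (Finset.range (2 * N + 1)).card :=
        (Finset.card_union_le _ _).trans (add_le_add Finset.card_image_le Finset.card_image_le)
    _ = 3 * N + 1 := by simp; ring

lemma IsExactL2Discretization.sq_lt_card {N m : ℕ} {x lam : Fin m → ℝ}
    (h : IsExactL2Discretization (quadraticFrequencies N) x lam) : N ^ 2 < m := by
  let D := Finset.Icc (0 : ℤ) (N ^ 2 : ℕ)
  have hmoment : ∀ p ∈ D, ∀ q ∈ D,
      weightedMoment x lam (p - q) = if p - q = 0 then 1 else 0 := by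
    intro p hp q hq
    obtain ⟨a, ha, b, hb, hab⟩ := exists_eq_sub_quadraticFrequencies (N := N) (d := p - q)
      (by simp only [D, Finset.mem_Icc] at hp hq; omega)
    rw [← hab]
    exact h.weightedMoment_sub ha hb
  have hD := card_le_of_weightedMoment_sub x lam D hmoment
  simp only [D, Int.card_Icc, sub_zero, Int.toNat_natCast_add_one] at hD
  omega

theorem exact_L2_discretization_quadratic_frequencies_general
    (N : ℕ) (m : ℕ)
    (x : Fin m → ℝ) (lam : Fin m → ℝ)
    (Q : Finset ℤ)
    (hQ : Q = (Finset.Icc 1 N).image (fun j : ℕ => (j : ℤ) ^ 2) ∪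
          (Finset.range (2 * N + 1)).image (fun j : ℕ => (j : ℤ)))
    (hexact : ∀ f ∈ trig1 Q,
      (1 / (2 * π)) * (∫ t in (0:ℝ)..(2 * π), ‖f t‖ ^ 2)
        = ∑ j, lam j * ‖f (x j)‖ ^ 2) :
    N ^ 2 ≤ m ∧ ((Q.card : ℝ) - 1) ^ 2 / 9 ≤ (m : ℝ) := by
  change Q = quadraticFrequencies N at hQ
  subst hQ
  have hm : N ^ 2 < m := IsExactL2Discretization.sq_lt_card hexact
  have hcard : (quadraticFrequencies N).card ≤ 3 * N + 1 := card_quadraticFrequencies_le N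
  have hcard_pos : 0 < (quadraticFrequencies N).card :=
    Finset.card_pos.mpr ⟨0, natCast_mem_quadraticFrequencies (Nat.zero_le _)⟩
  refine ⟨hm.le, ?_⟩
  rw [div_le_iff₀ (by norm_num)]
  have h1 : (1 : ℝ) ≤ (quadraticFrequencies N).card := by exact_mod_cast hcard_pos
  have h2 : ((quadraticFrequencies N).card : ℝ) ≤ 3 * N + 1 := by exact_mod_cast hcard
  have h3 : (N : ℝ) ^ 2 ≤ m := by exact_mod_cast hm.le
  nlinarith

/-- **Lower bound for exact `L_2` weighted discretization of `𝒯(Q)`** for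
`Q = {j² : 1 ≤ j ≤ N} ∪ {0,1,…,2N}`: if points `x_1,…,x_m ∈ [0,2π)` and real numbers
`λ_1,…,λ_m` satisfy `(1/2π)∫_0^{2π}|f|² dx = ∑_j λ_j |f(x_j)|²` for all `f ∈ 𝒯(Q)`,
then `m ≥ N²`, and consequently `m ≥ (|Q|-1)²/9`. -/
theorem exact_L2_discretization_quadratic_frequencies
    (N : ℕ) (hN : 0 < N) (m : ℕ)
    (x : Fin m → ℝ) (hx : ∀ j, x j ∈ Set.Ico (0 : ℝ) (2 * π)) (lam : Fin m → ℝ)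
    (Q : Finset ℤ)
    (hQ : Q = (Finset.Icc 1 N).image (fun j : ℕ => (j : ℤ) ^ 2) ∪
          (Finset.range (2 * N + 1)).image (fun j : ℕ => (j : ℤ)))
    (hexact : ∀ f ∈ trig1 Q,
      (1 / (2 * π)) * (∫ t in (0:ℝ)..(2 * π), ‖f t‖ ^ 2)
        = ∑ j, lam j * ‖f (x j)‖ ^ 2) :
    N ^ 2 ≤ m ∧ ((Q.card : ℝ) - 1) ^ 2 / 9 ≤ (m : ℝ) :=
  exact_L2_discretization_quadratic_frequencies_general N m x lam Q hQ hexact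
end

section
/- Let Ω ⊂ ℝ^d be equipped with a Borel probability measure μ, let 1 < p < ∞, and let p' be defined by 1/p + 1/p' = 1. Let X_N ⊂ L_p(Ω,μ) ∩ C(Ω) be an N-dimensional real subspace. Suppose there exist a finite set W ⊂ Ω, positive numbers (μ_ω)_{ω∈W}, and a constant C₁ > 0 such that ‖f‖_{L_p(Ω,μ)} ≤ C₁·(Σ_{ω∈W} μ_ω |f(ω)|^p)^{1/p} for every f ∈ X_N. Then there exist real numbers (λ_ω)_{ω∈W} such that ∫_Ω f dμ = Σ_{ω∈W} λ_ω f(ω) for every f ∈ X_N and (Σ_{ω∈W} |λ_ω/μ_ω|^{p'} μ_ω)^{1/p'} ≤ C₁. -/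
/-!
Sampling `f ↦ (μ_ω^{1/p} f(ω))_{ω ∈ W}` maps `X` into `ℓ_p^W` with norm
`(∑ μ_ω |f(ω)|^p)^{1/p}`. Since `|∫ f dμ| ≤ ‖f‖_{L_p(μ)}` on a probability space, the one-sided
estimate says that integration is bounded by `C₁` times the norm of the sample, so it factors
through the sampling map as a functional of norm at most `C₁` on its range. By Hahn–Banach this
functional extends to all of `ℓ_p^W`, where it is `y ↦ ∑ c_ω y_ω` with `‖c‖_{p'} ≤ C₁`, and
`λ_ω = μ_ω^{1/p} c_ω` are the required weights.
-/

open MeasureTheory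
open scoped ENNReal

theorem Real.Lq_le_of_inner_le_mul_Lp {ι : Type*} [Fintype ι] {p q : ℝ}
    (hpq : p.HolderConjugate q) {c : ι → ℝ} {C : ℝ} (hC : 0 ≤ C)
    (h : ∀ y : ι → ℝ, ∑ i, y i * c i ≤ C * (∑ i, |y i| ^ p) ^ (1 / p)) :
    (∑ i, |c i| ^ q) ^ (1 / q) ≤ C := by
  obtain hS | hS := (Finset.sum_nonneg fun i _ ↦ by positivity : 0 ≤ ∑ i, |c i| ^ q).eq_or_lt
  · rwa [← hS, Real.zero_rpow (one_div_ne_zero hpq.symm.ne_zero)]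
  -- `y = sign c * |c| ^ (q - 1)` is the equality case of Hölder's inequality
  have hy : ∀ i, (SignType.sign (c i) * |c i| ^ (q - 1)) * c i = |c i| ^ q ∧
      |SignType.sign (c i) * |c i| ^ (q - 1)| ^ p = |c i| ^ q := fun i ↦ by
    obtain hc | hc := eq_or_ne (c i) 0
    · simp [hc, Real.zero_rpow hpq.ne_zero, Real.zero_rpow hpq.symm.ne_zero]
    have hsign : |(SignType.sign (c i) : ℝ)| = 1 := by
      rcases hc.lt_or_gt with h | h <;> simp [h]
    constructor
    · rw [mul_right_comm, sign_mul_self, mul_comm, ← Real.rpow_add_one (abs_ne_zero.2 hc),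
        sub_add_cancel]
    · rw [abs_mul, hsign, one_mul, abs_of_nonneg (by positivity), ← Real.rpow_mul (abs_nonneg _),
        hpq.symm.sub_one_mul_conj]
  have key := h fun i ↦ SignType.sign (c i) * |c i| ^ (q - 1)
  simp only [fun i ↦ (hy i).1, fun i ↦ (hy i).2] at key
  rwa [one_div q, ← hpq.one_sub_inv, Real.rpow_sub hS, Real.rpow_one, div_le_iff₀ (by positivity),
    ← one_div]

theorem PiLp.exists_Lq_le_opNorm {ι : Type*} [Fintype ι] {p : ℝ≥0∞} [Fact (1 ≤ p)] {q : ℝ}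
    (hpq : p.toReal.HolderConjugate q) (g : StrongDual ℝ (PiLp p fun _ : ι ↦ ℝ)) :
    ∃ c : ι → ℝ, (∀ y, g y = ∑ i, y i * c i) ∧ (∑ i, |c i| ^ q) ^ (1 / q) ≤ ‖g‖ := by
  let b := PiLp.basisFun p ℝ ι
  have hg : ∀ y, g y = ∑ i, y i * g (b i) := fun y ↦ by
    conv_lhs => rw [← b.sum_repr y]
    simp [b]
  refine ⟨fun i ↦ g (b i), hg, Real.Lq_le_of_inner_le_mul_Lp hpq (norm_nonneg g) fun y ↦ ?_⟩
  have hy := (le_abs_self _).trans (g.le_opNorm (WithLp.toLp p y))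
  rw [hg, PiLp.norm_eq_sum hpq.pos] at hy
  simpa using hy

theorem LinearMap.exists_strongDual_comp_eq_of_norm_le {𝕜 V E : Type*} [RCLike 𝕜]
    [AddCommGroup V] [Module 𝕜 V] [NormedAddCommGroup E] [NormedSpace 𝕜 E]
    (T : V →ₗ[𝕜] E) (L : V →ₗ[𝕜] 𝕜) {C : ℝ} (hC : 0 ≤ C) (hL : ∀ v, ‖L v‖ ≤ C * ‖T v‖) :
    ∃ g : StrongDual 𝕜 E, ‖g‖ ≤ C ∧ ∀ v, g (T v) = L v := by
  have hker : LinearMap.ker T ≤ LinearMap.ker L := fun v hv ↦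
    norm_le_zero_iff.1 <| by simpa [LinearMap.mem_ker.1 hv] using hL v
  let ℓ : LinearMap.range T →ₗ[𝕜] 𝕜 :=
    (LinearMap.ker T).liftQ L hker ∘ₗ T.quotKerEquivRange.symm.toLinearMap
  have hℓ : ∀ v, ℓ ⟨T v, LinearMap.mem_range_self T v⟩ = L v := fun v ↦ by simp [ℓ]
  obtain ⟨g, hgℓ, hg⟩ := exists_extension_norm_eq _ <| ℓ.mkContinuous C <| by
    rintro ⟨_, v, rfl⟩
    simpa [hℓ] using hL v
  refine ⟨g, hg ▸ LinearMap.mkContinuous_norm_le _ hC _, fun v ↦ ?_⟩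
  simpa [hℓ] using hgℓ ⟨T v, LinearMap.mem_range_self T v⟩

noncomputable def weightedSample (p : ℝ) {α : Type*} (W : Finset α) (w : α → ℝ) :
    (α → ℝ) →ₗ[ℝ] PiLp (ENNReal.ofReal p) (fun _ : W ↦ ℝ) where
  toFun f := WithLp.toLp _ fun i ↦ w i ^ (1 / p) * f i
  map_add' f g := by ext; simp [mul_add]
  map_smul' c f := by ext; simp [mul_left_comm]

theorem norm_weightedSample {p : ℝ} (hp : 0 < p) {α : Type*} {W : Finset α} {w : α → ℝ}
    (hw : ∀ ω ∈ W, 0 ≤ w ω) (f : α → ℝ) :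
    ‖weightedSample p W w f‖ = (∑ ω ∈ W, w ω * |f ω| ^ p) ^ (1 / p) := by
  rw [PiLp.norm_eq_sum (by rwa [ENNReal.toReal_ofReal hp.le]), ENNReal.toReal_ofReal hp.le,
    ← Finset.sum_coe_sort W]
  congr 1
  refine Finset.sum_congr rfl fun i _ ↦ ?_
  have hwi := hw i i.2
  rw [weightedSample, LinearMap.coe_mk, AddHom.coe_mk, PiLp.toLp_apply, Real.norm_eq_abs, abs_mul,
    abs_of_nonneg (by positivity), Real.mul_rpow (by positivity) (abs_nonneg _),
    ← Real.rpow_mul hwi, one_div_mul_cancel hp.ne', Real.rpow_one]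

theorem Real.HolderConjugate.abs_rpow_mul_div_rpow_mul {p q w : ℝ} (hpq : p.HolderConjugate q)
    (hw : 0 < w) (c : ℝ) : |w ^ (1 / p) * c / w| ^ q * w = |c| ^ q := by
  rw [mul_div_right_comm, ← Real.rpow_sub_one hw.ne', one_div, hpq.inv_sub_one, abs_mul,
    abs_of_pos (by positivity), Real.mul_rpow (by positivity) (abs_nonneg _), ← Real.rpow_mul hw.le,
    neg_mul, inv_mul_cancel₀ hpq.symm.ne_zero, Real.rpow_neg_one]
  field_simp

noncomputable def Submodule.integralₗ {α : Type*} [MeasurableSpace α] (μ : Measure α)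
    (X : Submodule ℝ (α → ℝ)) (hX : ∀ f ∈ X, Integrable f μ) : X →ₗ[ℝ] ℝ where
  toFun f := ∫ x, f.1 x ∂μ
  map_add' f g := integral_add (hX f f.2) (hX g g.2)
  map_smul' c _ := integral_const_mul c _

section Integral

variable {α : Type*} [MeasurableSpace α] {μ : Measure α} {p : ℝ} {f : α → ℝ}

theorem MeasureTheory.Integrable.of_abs_rpow [IsFiniteMeasure μ] (hp : 1 ≤ p)
    (hf : AEStronglyMeasurable f μ) (h : Integrable (fun x ↦ |f x| ^ p) μ) : Integrable f μ :=
  (integrable_norm_iff hf).1 <| by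
    simpa using integrable_norm_rpow_of_le hf zero_le_one (by linarith) hp (by simpa using h)

theorem MeasureTheory.abs_integral_le_integral_abs_rpow_rpow [IsProbabilityMeasure μ] (hp : 1 < p)
    (hf : AEStronglyMeasurable f μ) (h : Integrable (fun x ↦ |f x| ^ p) μ) :
    |∫ x, f x ∂μ| ≤ (∫ x, |f x| ^ p ∂μ) ^ (1 / p) := by
  have hpq := Real.HolderConjugate.conjExponent hp
  have hmem : MemLp (fun x ↦ |f x|) (ENNReal.ofReal p) μ :=
    ((integrable_norm_rpow_iff hf (by simp; linarith) (by simp)).1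
      (by simpa [ENNReal.toReal_ofReal (by linarith : 0 ≤ p)] using h)).abs
  calc |∫ x, f x ∂μ| ≤ ∫ x, |f x| * 1 ∂μ := by simpa using abs_integral_le_integral_abs
    _ ≤ _ := integral_mul_le_Lp_mul_Lq_of_nonneg hpq (.of_forall fun x ↦ abs_nonneg (f x))
        (.of_forall fun _ ↦ zero_le_one) hmem (memLp_const 1)
    _ = _ := by simp

end Integral

theorem stable_exact_weighted_cubature_general
    (d : ℕ) (Ω : Set (Fin d → ℝ)) (μ : Measure Ω) [IsProbabilityMeasure μ]
    (p p' : ℝ) (hp : 1 < p) (hpp' : 1 / p + 1 / p' = 1)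
    (X : Submodule ℝ (Ω → ℝ))
    (hcont : ∀ f ∈ X, Continuous f)
    (hLp : ∀ f ∈ X, Integrable (fun x => |f x| ^ p) μ)
    (W : Finset Ω) (μw : Ω → ℝ) (hμw : ∀ ω ∈ W, 0 < μw ω)
    (C₁ : ℝ) (hC₁ : 0 < C₁)
    (honesided : ∀ f ∈ X,
      (∫ x, |f x| ^ p ∂μ) ^ (1 / p) ≤ C₁ * (∑ ω ∈ W, μw ω * |f ω| ^ p) ^ (1 / p)) :
    ∃ lam : Ω → ℝ,
      (∀ f ∈ X, ∫ x, f x ∂μ = ∑ ω ∈ W, lam ω * f ω) ∧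
      (∑ ω ∈ W, |lam ω / μw ω| ^ p' * μw ω) ^ (1 / p') ≤ C₁ := by
  classical
  have hpq : p.HolderConjugate p' :=
    Real.holderConjugate_iff.2 ⟨hp, by simpa [one_div] using hpp'⟩
  have : Fact (1 ≤ ENNReal.ofReal p) := ⟨ENNReal.one_le_ofReal.2 hp.le⟩
  have hmeas : ∀ f ∈ X, AEStronglyMeasurable f μ := fun f hf ↦ (hcont f hf).aestronglyMeasurable
  have hint : ∀ f ∈ X, Integrable f μ := fun f hf ↦ .of_abs_rpow hp.le (hmeas f hf) (hLp f hf)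
  have hbound (f : X) : ‖X.integralₗ μ hint f‖ ≤ C₁ * ‖weightedSample p W μw f‖ := by
    rw [Real.norm_eq_abs, norm_weightedSample hpq.pos fun ω hω ↦ (hμw ω hω).le]
    exact (abs_integral_le_integral_abs_rpow_rpow hp (hmeas f f.2) (hLp f f.2)).trans
      (honesided f f.2)
  obtain ⟨g, hgC, hgT⟩ :=
    ((weightedSample p W μw).comp X.subtype).exists_strongDual_comp_eq_of_norm_le _ hC₁.le hbound
  obtain ⟨c, hgc, hc⟩ := PiLp.exists_Lq_le_opNorm (by rwa [ENNReal.toReal_ofReal hpq.nonneg]) g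
  refine ⟨fun ω ↦ if h : ω ∈ W then μw ω ^ (1 / p) * c ⟨ω, h⟩ else 0, fun f hf ↦ ?_, ?_⟩
  · calc ∫ x, f x ∂μ = g (weightedSample p W μw f) := (hgT ⟨f, hf⟩).symm
      _ = ∑ i : W, μw i ^ (1 / p) * f i * c i := hgc _
      _ = _ := by
        rw [← Finset.sum_coe_sort W]
        refine Finset.sum_congr rfl fun i _ ↦ ?_
        simp only [dif_pos i.2]
        ring
  · calc _ = (∑ i : W, |c i| ^ p') ^ (1 / p') := by
          rw [← Finset.sum_coe_sort W]
          congr 1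
          refine Finset.sum_congr rfl fun i _ ↦ ?_
          simp only [dif_pos i.2]
          exact hpq.abs_rpow_mul_div_rpow_mul (hμw i i.2) _
      _ ≤ C₁ := hc.trans hgC

/-- **Stable exact weighted discretization from a one-sided Marcinkiewicz estimate.**
Let `Ω ⊂ ℝ^d` carry a Borel probability measure `μ`, `1 < p < ∞`, `1/p + 1/p' = 1`, and let
`X ⊂ L_p(Ω,μ) ∩ C(Ω)` be an `N`-dimensional real subspace. If a finite set `W ⊂ Ω` with
positive numbers `(μ_ω)` satisfies `‖f‖_p ≤ C₁ (∑_{ω∈W} μ_ω |f(ω)|^p)^{1/p}` for all `f ∈ X`,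
then there exist real numbers `(λ_ω)_{ω∈W}` with `∫_Ω f dμ = ∑_{ω∈W} λ_ω f(ω)` for all
`f ∈ X` and `(∑_{ω∈W} |λ_ω/μ_ω|^{p'} μ_ω)^{1/p'} ≤ C₁`. -/
theorem stable_exact_weighted_cubature
    (d N : ℕ) (Ω : Set (Fin d → ℝ)) (μ : Measure Ω) [IsProbabilityMeasure μ]
    (p p' : ℝ) (hp : 1 < p) (hpp' : 1 / p + 1 / p' = 1)
    (X : Submodule ℝ (Ω → ℝ)) (hdim : Module.finrank ℝ X = N)
    (hcont : ∀ f ∈ X, Continuous f)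
    (hLp : ∀ f ∈ X, Integrable (fun x => |f x| ^ p) μ)
    (W : Finset Ω) (μw : Ω → ℝ) (hμw : ∀ ω ∈ W, 0 < μw ω)
    (C₁ : ℝ) (hC₁ : 0 < C₁)
    (honesided : ∀ f ∈ X,
      (∫ x, |f x| ^ p ∂μ) ^ (1 / p) ≤ C₁ * (∑ ω ∈ W, μw ω * |f ω| ^ p) ^ (1 / p)) :
    ∃ lam : Ω → ℝ,
      (∀ f ∈ X, ∫ x, f x ∂μ = ∑ ω ∈ W, lam ω * f ω) ∧
      (∑ ω ∈ W, |lam ω / μw ω| ^ p' * μw ω) ^ (1 / p') ≤ C₁ :=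
  stable_exact_weighted_cubature_general d Ω μ p p' hp hpp' X hcont hLp W μw hμw C₁ hC₁ honesided
end
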